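/- For p > N, the sharp Morrey constant 𝔪_p(Ω) = inf{∫_Ω|∇u|^p : u ∈ C_0^∞(Ω), [u]_{C^{0,α_p}(closure Ω)} = 1}, with α_p = 1 - N/p, is independent of the open set Ω ⊆ ℝ^N: 𝔪_p(Ω) = 𝔪_p(ℝ^N). -/

import Mathlib

open Set Metric MeasureTheory

noncomputable def holderSem {N : ℕ} (α : ℝ) (S : Set (EuclideanSpace ℝ (Fin N)))
    (u : EuclideanSpace ℝ (Fin N) → ℝ) : ENNReal :=
  ⨆ x ∈ S, ⨆ y ∈ S, ENNReal.ofReal (|u x - u y| / ‖x - y‖ ^ α)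

/-- The sharp Morrey constant on an open set `Ω ⊆ ℝ^N`:
`𝔪_p(Ω) = inf {∫_Ω |∇u|^p : u ∈ C_0^∞(Ω), [u]_{C^{0,α_p}(closure Ω)} = 1}`, `α_p = 1 - N/p`. -/
noncomputable def morreyConstOn {N : ℕ} (p : ℝ) (Ω : Set (EuclideanSpace ℝ (Fin N))) : ℝ :=
  sInf {E : ℝ | ∃ u : EuclideanSpace ℝ (Fin N) → ℝ, ContDiff ℝ (⊤ : ℕ∞) u ∧
    HasCompactSupport u ∧ tsupport u ⊆ Ω ∧
    holderSem (1 - (N : ℝ)/p) (closure Ω) u = 1 ∧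
    E = ∫ x in Ω, ‖gradient u x‖ ^ p}

/-!
For `u` supported in the open set `Ω`, the Hölder seminorm over `closure Ω` already equals the one
over `ℝ^N`: if `x ∈ Ω` and `y ∉ Ω`, some boundary point `z` of `Ω` lies on the segment `[x, y]`,
and `u z = u y = 0` with `‖x - z‖ ≤ ‖x - y‖`. So every competitor for `Ω` is one for `ℝ^N` with the
same energy. Conversely, a competitor on `ℝ^N` is moved into a small ball inside `Ω` by
`u ↦ l ^ α * u ((x - x₀) / l)`, which preserves the `C^{0,α}` seminorm and, for `α = 1 - N / p`,
also the `p`-energy `∫ |∇u| ^ p`.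
-/

theorem IsPreconnected.inter_frontier_nonempty {X : Type*} [TopologicalSpace X] {s t : Set X}
    (hs : IsPreconnected s) (hst : (s ∩ t).Nonempty) (hs't : (s \ t).Nonempty) :
    (s ∩ frontier t).Nonempty := by
  by_contra h
  have hint : ∀ x ∈ s, x ∈ closure t → x ∈ interior t := fun x hxs hxc => by
    by_contra hxi
    exact h ⟨x, hxs, hxc, hxi⟩
  obtain ⟨x, hxs, hxt⟩ := hst
  obtain ⟨y, hys, hyt⟩ := hs't
  have hcover : s ⊆ interior t ∪ (closure t)ᶜ := fun z hzs => by
    by_cases hzc : z ∈ closure t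
    · exact Or.inl (hint z hzs hzc)
    · exact Or.inr hzc
  obtain ⟨z, -, hzi, hzc⟩ := hs _ _ isOpen_interior isClosed_closure.isOpen_compl hcover
    ⟨x, hxs, hint x hxs (subset_closure hxt)⟩
    ⟨y, hys, fun hyc => hyt (interior_subset (hint y hys hyc))⟩
  exact hzc (interior_subset_closure hzi)

section Dilation

variable {E : Type*} [NormedAddCommGroup E] [NormedSpace ℝ E]

-- The energy scales by `l ^ ((α - 1) * p + N)`, which is `1` exactly for `α = 1 - N / p`.
noncomputable def dilate (α l : ℝ) (x₀ : E) (u : E → ℝ) (x : E) : ℝ := l ^ α * u (l⁻¹ • (x - x₀))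

variable {α l : ℝ} {x₀ : E} {u : E → ℝ}

theorem ContDiff.dilate {n : WithTop ℕ∞} (hu : ContDiff ℝ n u) :
    ContDiff ℝ n (dilate α l x₀ u) :=
  contDiff_const.mul (hu.comp ((contDiff_id.sub contDiff_const).const_smul l⁻¹))

theorem tsupport_dilate_subset_ball (hl : 0 < l) {R : ℝ} (hR : tsupport u ⊆ ball 0 R) :
    tsupport (dilate α l x₀ u) ⊆ ball x₀ (l * R) := by
  intro x hx
  have hx' : l⁻¹ • (x - x₀) ∈ tsupport u :=
    tsupport_comp_subset_preimage u (f := fun x => l⁻¹ • (x - x₀)) (by fun_prop)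
      (tsupport_mul_subset_right (f := fun _ => l ^ α) hx)
  have hball := hR hx'
  rw [mem_ball_zero_iff, norm_smul, Real.norm_of_nonneg (inv_nonneg.2 hl.le),
    inv_mul_lt_iff₀ hl] at hball
  rwa [mem_ball, dist_eq_norm]

theorem exists_dilate_tsupport_subset [ProperSpace E] (hu : HasCompactSupport u) {Ω : Set E}
    (hΩ : IsOpen Ω) (hx₀ : x₀ ∈ Ω) :
    ∃ l > 0, tsupport (dilate α l x₀ u) ⊆ Ω ∧ HasCompactSupport (dilate α l x₀ u) := by
  obtain ⟨ε, hε, hball⟩ := isOpen_iff.1 hΩ x₀ hx₀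
  obtain ⟨R, hR, huR⟩ := hu.isBounded.subset_ball_lt 0 0
  have hsub : tsupport (dilate α (ε / R) x₀ u) ⊆ ball x₀ ε := by
    simpa only [div_mul_cancel₀ ε hR.ne'] using tsupport_dilate_subset_ball (div_pos hε hR) huR
  exact ⟨ε / R, div_pos hε hR, hsub.trans hball, (isCompact_closedBall x₀ ε).of_isClosed_subset
    (isClosed_tsupport _) (hsub.trans ball_subset_closedBall)⟩

end Dilation

section Gradient

variable {E : Type*} [NormedAddCommGroup E] [InnerProductSpace ℝ E] [CompleteSpace E]
  {α l : ℝ} {x₀ : E} {u : E → ℝ}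

theorem gradient_dilate {x : E} (hu : DifferentiableAt ℝ u (l⁻¹ • (x - x₀))) :
    gradient (dilate α l x₀ u) x = (l ^ α * l⁻¹) • gradient u (l⁻¹ • (x - x₀)) := by
  have hd : HasFDerivAt (dilate α l x₀ u)
      ((l ^ α * l⁻¹) • fderiv ℝ u (l⁻¹ • (x - x₀))) x := by
    refine ((hu.hasFDerivAt.comp x (((hasFDerivAt_id x).sub_const x₀).const_smul l⁻¹)).const_mul
      (l ^ α)).congr_fderiv ?_
    ext w
    simp only [ContinuousLinearMap.comp_smulₛₗ, map_inv₀, Real.ringHom_apply,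
      ContinuousLinearMap.comp_id, smul_apply, smul_eq_mul]
    ring
  rw [gradient, hd.fderiv, map_smul, gradient]

theorem integral_norm_gradient_rpow_dilate [MeasurableSpace E] [BorelSpace E]
    [FiniteDimensional ℝ E] (μ : Measure E) [μ.IsAddHaarMeasure] (hl : 0 < l)
    (hu : Differentiable ℝ u) (p : ℝ) :
    ∫ x, ‖gradient (dilate α l x₀ u) x‖ ^ p ∂μ
      = l ^ ((α - 1) * p + Module.finrank ℝ E) * ∫ x, ‖gradient u x‖ ^ p ∂μ := by
  have hpt : ∀ x, ‖gradient (dilate α l x₀ u) x‖ ^ p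
      = l ^ ((α - 1) * p) * ‖gradient u (l⁻¹ • (x - x₀))‖ ^ p := fun x => by
    rw [gradient_dilate (hu _), norm_smul, ← Real.rpow_neg_one, ← Real.rpow_add hl,
      Real.norm_of_nonneg (Real.rpow_nonneg hl.le _),
      Real.mul_rpow (Real.rpow_nonneg hl.le _) (norm_nonneg _), ← Real.rpow_mul hl.le,
      ← sub_eq_add_neg]
  simp_rw [hpt]
  rw [integral_const_mul, integral_sub_right_eq_self (fun y => ‖gradient u (l⁻¹ • y)‖ ^ p) x₀,
    Measure.integral_comp_inv_smul_of_nonneg μ (fun y => ‖gradient u y‖ ^ p) hl.le, smul_eq_mul,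
    ← mul_assoc, ← Real.rpow_natCast, ← Real.rpow_add hl]

theorem setIntegral_norm_gradient_rpow_of_tsupport_subset [MeasurableSpace E] (μ : Measure E)
    {Ω : Set E} (hu : tsupport u ⊆ Ω) {p : ℝ} (hp : p ≠ 0) :
    ∫ x in Ω, ‖gradient u x‖ ^ p ∂μ = ∫ x, ‖gradient u x‖ ^ p ∂μ :=
  setIntegral_eq_integral_of_forall_compl_eq_zero fun x hx => by
    rw [gradient, fderiv_of_notMem_tsupport ℝ fun h => hx (hu h), map_zero, norm_zero,
      Real.zero_rpow hp]

end Gradient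

section HolderSeminorm

variable {N : ℕ} {α : ℝ} {u : EuclideanSpace ℝ (Fin N) → ℝ}

theorem holderSem_univ :
    holderSem α univ u = ⨆ (x) (y), ENNReal.ofReal (|u x - u y| / ‖x - y‖ ^ α) := by
  simp only [holderSem, mem_univ, iSup_pos]

theorem holderSem_mono {S T : Set (EuclideanSpace ℝ (Fin N))} (h : S ⊆ T) :
    holderSem α S u ≤ holderSem α T u :=
  iSup₂_mono' fun x hx => ⟨x, h hx, iSup₂_mono' fun y hy => ⟨y, h hy, le_rfl⟩⟩

theorem le_holderSem_closure_of_ne_zero (hα : 0 ≤ α) {Ω : Set (EuclideanSpace ℝ (Fin N))}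
    (hΩ : IsOpen Ω) (hu : tsupport u ⊆ Ω) {x : EuclideanSpace ℝ (Fin N)} (hx : u x ≠ 0)
    (y : EuclideanSpace ℝ (Fin N)) :
    ENNReal.ofReal (|u x - u y| / ‖x - y‖ ^ α) ≤ holderSem α (closure Ω) u := by
  have hxΩ : x ∈ Ω := hu (subset_tsupport u hx)
  have hle : ∀ z ∈ closure Ω,
      ENNReal.ofReal (|u x - u z| / ‖x - z‖ ^ α) ≤ holderSem α (closure Ω) u :=
    fun z hz => le_iSup₂_of_le x (subset_closure hxΩ) (le_iSup₂_of_le z hz le_rfl)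
  by_cases hy : y ∈ Ω
  · exact hle y (subset_closure hy)
  have hzero : ∀ z ∉ Ω, u z = 0 := fun z hz => image_eq_zero_of_notMem_tsupport fun h => hz (hu h)
  obtain ⟨z, hzseg, hzfr⟩ := (convex_segment x y).isPreconnected.inter_frontier_nonempty
    ⟨x, left_mem_segment ℝ x y, hxΩ⟩ ⟨y, right_mem_segment ℝ x y, hy⟩
  have hzΩ : z ∉ Ω := fun h => hΩ.inter_frontier_eq.subset ⟨h, hzfr⟩
  have hxz : 0 < ‖x - z‖ := norm_sub_pos_iff.2 fun h => hzΩ (h ▸ hxΩ)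
  refine le_trans (ENNReal.ofReal_le_ofReal ?_) (hle z (frontier_subset_closure hzfr))
  rw [hzero y hy, hzero z hzΩ]
  refine div_le_div_of_nonneg_left (abs_nonneg _) (Real.rpow_pos_of_pos hxz α)
    (Real.rpow_le_rpow hxz.le ?_ hα)
  rw [norm_sub_rev x z, norm_sub_rev x y]
  exact norm_sub_le_of_mem_segment hzseg

theorem holderSem_univ_eq_closure (hα : 0 ≤ α) {Ω : Set (EuclideanSpace ℝ (Fin N))}
    (hΩ : IsOpen Ω) (hu : tsupport u ⊆ Ω) :
    holderSem α univ u = holderSem α (closure Ω) u := by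
  refine le_antisymm ?_ (holderSem_mono (subset_univ _))
  rw [holderSem_univ]
  refine iSup₂_le fun x y => ?_
  by_cases hx : u x = 0
  · by_cases hy : u y = 0
    · simp [hx, hy]
    · rw [abs_sub_comm, norm_sub_rev]
      exact le_holderSem_closure_of_ne_zero hα hΩ hu hy x
  · exact le_holderSem_closure_of_ne_zero hα hΩ hu hx y

theorem holderSem_univ_dilate {l : ℝ} (hl : 0 < l) (x₀ : EuclideanSpace ℝ (Fin N)) :
    holderSem α univ (dilate α l x₀ u) = holderSem α univ u := by
  set A : EuclideanSpace ℝ (Fin N) → EuclideanSpace ℝ (Fin N) := fun x => l⁻¹ • (x - x₀)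
  set q : EuclideanSpace ℝ (Fin N) → EuclideanSpace ℝ (Fin N) → ENNReal :=
    fun x y => ENNReal.ofReal (|u x - u y| / ‖x - y‖ ^ α)
  have hA : Function.Surjective A := fun y => ⟨x₀ + l • y, by simp [A, hl.ne']⟩
  have hq : ∀ x y, ENNReal.ofReal
      (|dilate α l x₀ u x - dilate α l x₀ u y| / ‖x - y‖ ^ α) = q (A x) (A y) := fun x y => by
    have hnorm : ‖x - y‖ = l * ‖A x - A y‖ := by
      rw [← smul_sub, sub_sub_sub_cancel_right, norm_smul,
        Real.norm_of_nonneg (inv_nonneg.2 hl.le), mul_inv_cancel_left₀ hl.ne']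
    rw [hnorm, Real.mul_rpow hl.le (norm_nonneg _), dilate, dilate, ← mul_sub, abs_mul,
      abs_of_nonneg (Real.rpow_nonneg hl.le α),
      mul_div_mul_left _ _ (Real.rpow_pos_of_pos hl α).ne']
  calc holderSem α univ (dilate α l x₀ u) = ⨆ (x) (y), q (A x) (A y) := by
        simp only [holderSem_univ, hq]
    _ = ⨆ (a) (y), q a (A y) := hA.iSup_comp fun a => ⨆ y, q a (A y)
    _ = ⨆ (a) (b), q a b := iSup_congr fun a => hA.iSup_comp (q a)
    _ = holderSem α univ u := holderSem_univ.symm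

end HolderSeminorm

theorem morreyConstOn_eq_univ_general {N : ℕ} (p : ℝ) (hp : (N : ℝ) < p)
    (Ω : Set (EuclideanSpace ℝ (Fin N))) (hΩ : IsOpen Ω) (hΩne : Ω.Nonempty) :
    morreyConstOn p Ω = morreyConstOn p (Set.univ : Set (EuclideanSpace ℝ (Fin N))) := by
  have hp0 : 0 < p := (Nat.cast_nonneg N).trans_lt hp
  have hα : 0 ≤ 1 - (N : ℝ) / p := sub_nonneg.2 ((div_le_one hp0).2 hp.le)
  have hscale :
      ((1 - (N : ℝ) / p) - 1) * p + Module.finrank ℝ (EuclideanSpace ℝ (Fin N)) = 0 := by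
    rw [finrank_euclideanSpace_fin]
    field_simp
    ring
  unfold morreyConstOn
  congr 1
  ext e
  constructor
  · rintro ⟨u, hu, hcs, huΩ, hhold, rfl⟩
    refine ⟨u, hu, hcs, subset_univ _, ?_, ?_⟩
    · rwa [closure_univ, holderSem_univ_eq_closure hα hΩ huΩ]
    · rw [setIntegral_univ, setIntegral_norm_gradient_rpow_of_tsupport_subset _ huΩ hp0.ne']
  · rintro ⟨u, hu, hcs, -, hhold, rfl⟩
    obtain ⟨x₀, hx₀⟩ := hΩne
    obtain ⟨l, hl, hvΩ, hvcs⟩ := exists_dilate_tsupport_subset (α := 1 - (N : ℝ) / p) hcs hΩ hx₀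
    refine ⟨dilate _ l x₀ u, hu.dilate, hvcs, hvΩ, ?_, ?_⟩
    · rwa [← holderSem_univ_eq_closure hα hΩ hvΩ, holderSem_univ_dilate hl, ← closure_univ]
    · rw [setIntegral_norm_gradient_rpow_of_tsupport_subset _ hvΩ hp0.ne',
        integral_norm_gradient_rpow_dilate _ hl (hu.differentiable (by simp)), hscale,
        Real.rpow_zero, one_mul, setIntegral_univ]

/-- For `p > N`, the sharp Morrey constant does not depend on the open set:
`𝔪_p(Ω) = 𝔪_p(ℝ^N)`. -/
theorem morreyConstOn_eq_univ {N : ℕ} (hN : 0 < N) (p : ℝ) (hp : (N : ℝ) < p)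
    (Ω : Set (EuclideanSpace ℝ (Fin N))) (hΩ : IsOpen Ω) (hΩne : Ω.Nonempty) :
    morreyConstOn p Ω = morreyConstOn p (Set.univ : Set (EuclideanSpace ℝ (Fin N))) :=
  morreyConstOn_eq_univ_general p hp Ω hΩ hΩne
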